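/- The dimension of the trimmed polynomial space P_r^−Λ^k(ℝ^n) := P_{r−1}Λ^k(ℝ^n) ⊕ κH_{r−1}Λ^{k+1}(ℝ^n) equals binomial(r+n, r+k)·binomial(r+k−1, k). -/

import Mathlib

open MvPolynomial

/-- Polynomial differential forms on `ℝ^n`: a family of polynomial coefficients indexed by
subsets `σ ⊆ {1,…,n}`; a `k`-form is supported on sets of cardinality `k`. -/
abbrev PolyForm (n : ℕ) := Finset (Fin n) → MvPolynomial (Fin n) ℝ

/-- The sign `(-1)^{#{j ∈ σ : j < i}}`. -/
noncomputable def sgn {n : ℕ} (σ : Finset (Fin n)) (i : Fin n) : MvPolynomial (Fin n) ℝ :=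
  (-1) ^ (σ.filter (fun j => j < i)).card

/-- The exterior derivative `d`. -/
noncomputable def extD (n : ℕ) : PolyForm n →ₗ[ℝ] PolyForm n where
  toFun ω := fun σ => ∑ i ∈ σ, sgn σ i * pderiv i (ω (σ.erase i))
  map_add' ω η := by
    funext σ
    simp [Pi.add_apply, mul_add, Finset.sum_add_distrib]
  map_smul' c ω := by
    funext σ
    simp [Pi.smul_apply, Finset.smul_sum, mul_smul_comm]

/-- The Koszul operator `κ` (contraction with the position vector field). -/
noncomputable def koszul (n : ℕ) : PolyForm n →ₗ[ℝ] PolyForm n where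
  toFun ω := fun σ => ∑ i ∈ σᶜ, sgn σ i * X i * ω (insert i σ)
  map_add' ω η := by
    funext σ
    simp [Pi.add_apply, mul_add, Finset.sum_add_distrib]
  map_smul' c ω := by
    funext σ
    simp [Pi.smul_apply, Finset.smul_sum, mul_smul_comm]

/-- The space of (polynomial) differential `k`-forms: families supported on index sets of
cardinality `k`. -/
noncomputable def Lambda (n k : ℕ) : Submodule ℝ (PolyForm n) where
  carrier := {ω | ∀ σ, σ.card ≠ k → ω σ = 0}
  zero_mem' := fun σ _ => rfl
  add_mem' := fun ha hb σ h => by simp only [Pi.add_apply, ha σ h, hb σ h, add_zero]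
  smul_mem' := fun c ω h σ hσ => by simp only [Pi.smul_apply, h σ hσ, smul_zero]

/-- The form monomial `x^α dx_σ`. -/
noncomputable def formMonomial {n : ℕ} (α : Fin n →₀ ℕ) (σ : Finset (Fin n)) : PolyForm n :=
  fun τ => if τ = σ then monomial α 1 else 0

/-- The (total) degree `|α|` of a multi-index. -/
def mdeg {n : ℕ} (α : Fin n →₀ ℕ) : ℕ := α.sum fun _ m => m

/-- The linear degree of the form monomial `x^α dx_σ`: the number of `i ∉ σ` with `α i = 1`. -/
def ldeg {n : ℕ} (α : Fin n →₀ ℕ) (σ : Finset (Fin n)) : ℕ :=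
  ((σᶜ).filter fun i => α i = 1).card

/-- `H_rΛ^k(ℝ^n)`: `k`-forms with homogeneous degree-`r` polynomial coefficients. -/
noncomputable def Hspace (n r k : ℕ) : Submodule ℝ (PolyForm n) :=
  Submodule.span ℝ {ω | ∃ α σ, σ.card = k ∧ mdeg α = r ∧ ω = formMonomial α σ}

/-- `P_rΛ^k(ℝ^n)`: `k`-forms with polynomial coefficients of degree at most `r`. -/
noncomputable def Pspace (n r k : ℕ) : Submodule ℝ (PolyForm n) :=
  Submodule.span ℝ {ω | ∃ α σ, σ.card = k ∧ mdeg α ≤ r ∧ ω = formMonomial α σ}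

/-- `H_{r,l}Λ^k(ℝ^n)`: homogeneous degree-`r` `k`-forms of linear degree at least `l`. -/
noncomputable def Hl (n r l k : ℕ) : Submodule ℝ (PolyForm n) :=
  Submodule.span ℝ
    {ω | ∃ α σ, σ.card = k ∧ mdeg α = r ∧ l ≤ ldeg α σ ∧ ω = formMonomial α σ}

/-- `J_rΛ^k(ℝ^n) := Σ_{l ≥ 1} κ H_{r+l-1, l}Λ^{k+1}(ℝ^n)` (here `l` is reindexed as `l+1`). -/
noncomputable def Jspace (n r k : ℕ) : Submodule ℝ (PolyForm n) :=
  ⨆ l : ℕ, Submodule.map (koszul n) (Hl n (r + l) (l + 1) (k + 1))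

/-- The trimmed polynomial space `P_r^-Λ^k := P_{r-1}Λ^k ⊕ κ H_{r-1}Λ^{k+1}`. -/
noncomputable def PminusSpace (n r k : ℕ) : Submodule ℝ (PolyForm n) :=
  Pspace n (r - 1) k ⊔ Submodule.map (koszul n) (Hspace n (r - 1) (k + 1))

/-- The serendipity space `S_rΛ^k := P_rΛ^k + J_rΛ^k + d J_{r+1}Λ^{k-1}`
(the last summand being absent for `k = 0`). -/
noncomputable def Sspace (n r k : ℕ) : Submodule ℝ (PolyForm n) :=
  Pspace n r k ⊔ Jspace n r k ⊔
    (if k = 0 then ⊥ else Submodule.map (extD n) (Jspace n (r + 1) (k - 1)))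

/-- The trimmed serendipity space `S_r^-Λ^k := S_{r-1}Λ^k + κ S_{r-1}Λ^{k+1}`. -/
noncomputable def SminusSpace (n r k : ℕ) : Submodule ℝ (PolyForm n) :=
  Sspace n (r - 1) k ⊔ Submodule.map (koszul n) (Sspace n (r - 1) (k + 1))


/-!
`P_{r-1}Λ^k` and `κH_{r-1}Λ^{k+1}` meet only in `0`, because the coefficients of the latter are
homogeneous of degree `r`; so the dimensions add, and the first one is a count of form monomials.
For the second, the homotopy formula `dκ + κd = r + k` on `H_rΛ^k`, together with `κκ = 0`,
shows that the kernel of `κ` on `H_{r+1}Λ^k` is exactly `κH_rΛ^{k+1}`. Rank–nullity then gives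
`dim κH_{r+1}Λ^k + dim κH_rΛ^{k+1} = dim H_{r+1}Λ^k`, which determines `dim κH_rΛ^{k+1}` by
induction on `k`, starting from `κ = 0` on `0`-forms. What remains are binomial identities.
-/

open Finset Submodule Module

section Monomials

variable {n : ℕ}

lemma mdeg_cons (y : ℕ) (α : Fin n →₀ ℕ) : mdeg (Finsupp.cons y α) = y + mdeg α :=
  Finsupp.sum_cons n α y

lemma card_mdeg_eq (n r : ℕ) :
    Nat.card {α : Fin n →₀ ℕ // mdeg α = r} = (n + r - 1).choose r := by
  refine (Nat.card_congr (Sym.equivNatSum (Fin n) r).symm).trans ?_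
  rw [Nat.card_eq_fintype_card, Sym.card_sym_eq_choose, Fintype.card_fin]

instance (r : ℕ) : Finite {α : Fin n →₀ ℕ // mdeg α = r} :=
  Finite.of_equiv _ (Sym.equivNatSum (Fin n) r)

/-- Variable `0` is a slack variable carrying the missing degree `r - mdeg α`. -/
noncomputable def mdegLeEquiv (n r : ℕ) :
    {α : Fin n →₀ ℕ // mdeg α ≤ r} ≃ {β : Fin (n + 1) →₀ ℕ // mdeg β = r} where
  toFun α := ⟨Finsupp.cons (r - mdeg α.1) α.1, by rw [mdeg_cons]; have := α.2; omega⟩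
  invFun β := ⟨Finsupp.tail β.1, by
    have := mdeg_cons (β.1 0) (Finsupp.tail β.1)
    rw [Finsupp.cons_tail, β.2] at this
    omega⟩
  left_inv α := Subtype.ext (Finsupp.tail_cons _ _)
  right_inv β := by
    have h := mdeg_cons (β.1 0) (Finsupp.tail β.1)
    rw [Finsupp.cons_tail, β.2] at h
    refine Subtype.ext ?_
    dsimp only
    rw [show r - mdeg (Finsupp.tail β.1) = β.1 0 by omega, Finsupp.cons_tail]

instance (r : ℕ) : Finite {α : Fin n →₀ ℕ // mdeg α ≤ r} :=
  Finite.of_equiv _ (mdegLeEquiv n r).symm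

lemma card_mdeg_le (n r : ℕ) :
    Nat.card {α : Fin n →₀ ℕ // mdeg α ≤ r} = (n + r).choose r := by
  rw [Nat.card_congr (mdegLeEquiv n r), card_mdeg_eq, Nat.add_right_comm, Nat.add_sub_cancel]

end Monomials

lemma Basis.finrank_span_image {ι K V : Type*} [DivisionRing K] [AddCommGroup V] [Module K V]
    (b : Basis ι K V) (s : Set ι) [Finite s] :
    finrank K (span K (b '' s)) = Nat.card s := by
  have := Fintype.ofFinite s
  rw [Set.image_eq_range, Nat.card_eq_fintype_card]
  exact finrank_span_eq_card (b.linearIndependent.comp _ Subtype.val_injective)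

section FormMonomials

variable {n : ℕ}

noncomputable def formBasis (n : ℕ) :
    Basis (Finset (Fin n) × (Fin n →₀ ℕ)) ℝ (PolyForm n) :=
  (Pi.basis fun _ => basisMonomials (Fin n) ℝ).reindex (Equiv.sigmaEquivProd _ _)

lemma formBasis_apply (σ : Finset (Fin n)) (α : Fin n →₀ ℕ) :
    formBasis n (σ, α) = formMonomial α σ := by
  funext τ
  simp [formBasis, formMonomial, Pi.single_apply]

lemma setOf_formMonomial_eq_image (P : (Fin n →₀ ℕ) → Prop) (k : ℕ) :
    {ω : PolyForm n | ∃ α σ, σ.card = k ∧ P α ∧ ω = formMonomial α σ} =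
      formBasis n '' ({σ | σ.card = k} ×ˢ {α | P α}) := by
  ext ω
  constructor
  · rintro ⟨α, σ, hσ, hα, rfl⟩
    exact ⟨(σ, α), ⟨hσ, hα⟩, formBasis_apply σ α⟩
  · rintro ⟨⟨σ, α⟩, ⟨hσ, hα⟩, rfl⟩
    exact ⟨α, σ, hσ, hα, formBasis_apply σ α⟩

lemma finrank_span_formMonomial (P : (Fin n →₀ ℕ) → Prop) [Finite {α // P α}] (k : ℕ) :
    finrank ℝ (span ℝ {ω : PolyForm n | ∃ α σ, σ.card = k ∧ P α ∧ ω = formMonomial α σ}) =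
      Nat.card {α // P α} * n.choose k := by
  have : Finite {α | P α} := ‹Finite {α // P α}›
  rw [setOf_formMonomial_eq_image, Basis.finrank_span_image,
    Nat.card_congr (Equiv.Set.prod _ _), Nat.card_prod, mul_comm]
  congr 1
  simp [Nat.card_eq_fintype_card]

lemma finrank_Hspace (n r k : ℕ) :
    finrank ℝ (Hspace n r k) = (n + r - 1).choose r * n.choose k := by
  rw [Hspace, finrank_span_formMonomial (mdeg · = r), card_mdeg_eq]

lemma finrank_Pspace (n r k : ℕ) :
    finrank ℝ (Pspace n r k) = (n + r).choose r * n.choose k := by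
  rw [Pspace, finrank_span_formMonomial (mdeg · ≤ r), card_mdeg_le]

end FormMonomials

lemma Finset.sum_sum_erase_eq_zero_of_antisymm {ι M : Type*} [DecidableEq ι] [AddCommGroup M]
    [IsAddTorsionFree M] (s : Finset ι) (f : ι → ι → M)
    (hf : ∀ i ∈ s, ∀ j ∈ s, i ≠ j → f i j = -f j i) :
    ∑ i ∈ s, ∑ j ∈ s.erase i, f i j = 0 := by
  refine self_eq_neg.mp ?_
  calc ∑ i ∈ s, ∑ j ∈ s.erase i, f i j = ∑ j ∈ s, ∑ i ∈ s.erase j, f i j :=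
        Finset.sum_comm' fun i j => by simp only [mem_erase]; grind
    _ = -∑ i ∈ s, ∑ j ∈ s.erase i, f i j := by
        simp only [← sum_neg_distrib]
        exact sum_congr rfl fun j hj => sum_congr rfl fun i hi =>
          hf i (mem_of_mem_erase hi) j hj (ne_of_mem_erase hi)

section Signs

variable {n : ℕ}

lemma sgn_eq_C (σ : Finset (Fin n)) (i : Fin n) :
    sgn σ i = C ((-1 : ℝ) ^ (σ.filter (· < i)).card) := by
  simp [sgn]

lemma sgn_mul_self (σ : Finset (Fin n)) (i : Fin n) : sgn σ i * sgn σ i = 1 := by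
  simp [sgn, ← mul_pow]

lemma sgn_insert_self (σ : Finset (Fin n)) (i : Fin n) : sgn (insert i σ) i = sgn σ i := by
  simp [sgn, filter_insert]

lemma sgn_erase_self (σ : Finset (Fin n)) (i : Fin n) : sgn (σ.erase i) i = sgn σ i := by
  simp [sgn, filter_erase]

lemma sgn_insert {σ : Finset (Fin n)} {i : Fin n} (j : Fin n) (hi : i ∉ σ) :
    sgn (insert i σ) j = (if i < j then -1 else 1) * sgn σ j := by
  unfold sgn
  rw [filter_insert]
  split_ifs with hlt
  · rw [card_insert_of_notMem (fun h => hi (mem_of_mem_filter i h)), pow_succ, mul_comm]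
  · rw [one_mul]

lemma sgn_mul_sgn_insert {σ : Finset (Fin n)} {i j : Fin n} (hi : i ∉ σ) (hj : j ∉ σ)
    (hij : i ≠ j) :
    sgn σ i * sgn (insert i σ) j = -(sgn σ j * sgn (insert j σ) i) := by
  rw [sgn_insert j hi, sgn_insert i hj]
  rcases hij.lt_or_gt with h | h
  · rw [if_pos h, if_neg (asymm h)]; ring
  · rw [if_neg (asymm h), if_pos h]; ring

lemma sgn_mul_sgn_erase {σ : Finset (Fin n)} {i j : Fin n} (hi : i ∈ σ) (hj : j ∉ σ) :
    sgn σ i * sgn (σ.erase i) j = -(sgn σ j * sgn (insert j σ) i) := by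
  obtain ⟨τ, hiτ, rfl⟩ : ∃ τ, i ∉ τ ∧ σ = insert i τ :=
    ⟨σ.erase i, notMem_erase i σ, (insert_erase hi).symm⟩
  have hjτ : j ∉ τ := fun h => hj (mem_insert_of_mem h)
  have hij : i ≠ j := by rintro rfl; exact hj (mem_insert_self i τ)
  rw [erase_insert hiτ, insert_comm, sgn_insert_self, sgn_insert_self, sgn_insert j hiτ,
    sgn_insert i hjτ]
  rcases hij.lt_or_gt with h | h
  · rw [if_pos h, if_neg (asymm h)]; ring
  · rw [if_neg (asymm h), if_pos h]; ring

end Signs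

section KoszulComplex

variable {n : ℕ}

lemma koszul_apply (ω : PolyForm n) (σ : Finset (Fin n)) :
    koszul n ω σ = ∑ i ∈ σᶜ, sgn σ i * X i * ω (insert i σ) := rfl

lemma extD_apply (ω : PolyForm n) (σ : Finset (Fin n)) :
    extD n ω σ = ∑ i ∈ σ, sgn σ i * pderiv i (ω (σ.erase i)) := rfl

lemma pderiv_sgn_mul (σ : Finset (Fin n)) (i j : Fin n) (p : MvPolynomial (Fin n) ℝ) :
    pderiv j (sgn σ i * p) = sgn σ i * pderiv j p := by
  rw [sgn_eq_C, pderiv_C_mul]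

lemma koszul_koszul (ω : PolyForm n) : koszul n (koszul n ω) = 0 := by
  funext σ
  have expand : ∀ i ∈ σᶜ, sgn σ i * X i * koszul n ω (insert i σ) =
      ∑ j ∈ σᶜ.erase i, sgn σ i * sgn (insert i σ) j * (X i * X j * ω (insert j (insert i σ))) := by
    intro i _
    rw [koszul_apply, compl_insert, mul_sum]
    exact sum_congr rfl fun j _ => by ring
  rw [koszul_apply, sum_congr rfl expand, Pi.zero_apply]
  refine sum_sum_erase_eq_zero_of_antisymm _ _ fun i hi j hj hij => ?_
  rw [sgn_mul_sgn_insert (mem_compl.mp hi) (mem_compl.mp hj) hij, insert_comm]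
  ring

lemma extD_koszul_apply (ω : PolyForm n) (σ : Finset (Fin n)) :
    extD n (koszul n ω) σ = σ.card • ω σ + ∑ i ∈ σ, X i * pderiv i (ω σ) +
      ∑ i ∈ σ, ∑ j ∈ σᶜ, sgn σ i * sgn (σ.erase i) j *
        (X j * pderiv i (ω (insert j (σ.erase i)))) := by
  have expand : ∀ i ∈ σ, sgn σ i * pderiv i (koszul n ω (σ.erase i)) =
      (ω σ + X i * pderiv i (ω σ)) + ∑ j ∈ σᶜ, sgn σ i * sgn (σ.erase i) j *
        (X j * pderiv i (ω (insert j (σ.erase i)))) := by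
    intro i hi
    have hi' : i ∉ σᶜ := fun h => mem_compl.mp h hi
    rw [koszul_apply, compl_erase, sum_insert hi', insert_erase hi, map_add, map_sum, mul_add,
      mul_sum, mul_assoc, pderiv_sgn_mul, sgn_erase_self, ← mul_assoc, sgn_mul_self, one_mul,
      pderiv_mul, pderiv_X_self, one_mul]
    refine congrArg _ (sum_congr rfl fun j hj => ?_)
    have hji : j ≠ i := by rintro rfl; exact hi' hj
    rw [mul_assoc, pderiv_sgn_mul, pderiv_mul, pderiv_X_of_ne hji, zero_mul, zero_add]
    ring
  rw [extD_apply, sum_congr rfl expand, sum_add_distrib, sum_add_distrib, sum_const]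

lemma koszul_extD_apply (ω : PolyForm n) (σ : Finset (Fin n)) :
    koszul n (extD n ω) σ = ∑ j ∈ σᶜ, X j * pderiv j (ω σ) +
      ∑ j ∈ σᶜ, ∑ i ∈ σ, sgn σ j * sgn (insert j σ) i *
        (X j * pderiv i (ω (insert j (σ.erase i)))) := by
  have expand : ∀ j ∈ σᶜ, sgn σ j * X j * extD n ω (insert j σ) =
      X j * pderiv j (ω σ) + ∑ i ∈ σ, sgn σ j * sgn (insert j σ) i *
        (X j * pderiv i (ω (insert j (σ.erase i)))) := by
    intro j hj
    have hjσ : j ∉ σ := mem_compl.mp hj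
    rw [extD_apply, sum_insert hjσ, erase_insert hjσ, sgn_insert_self, mul_add, mul_sum]
    congr 1
    · linear_combination (X j * pderiv j (ω σ)) * sgn_mul_self σ j
    · refine sum_congr rfl fun i hi => ?_
      rw [erase_insert_of_ne (by rintro rfl; exact hjσ hi)]
      ring
  rw [koszul_apply, sum_congr rfl expand, sum_add_distrib]

lemma extD_koszul_add_koszul_extD_apply (ω : PolyForm n) (σ : Finset (Fin n)) :
    extD n (koszul n ω) σ + koszul n (extD n ω) σ =
      σ.card • ω σ + ∑ i, X i * pderiv i (ω σ) := by
  have cancel : ∑ i ∈ σ, ∑ j ∈ σᶜ, sgn σ i * sgn (σ.erase i) j *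
        (X j * pderiv i (ω (insert j (σ.erase i)))) +
      ∑ j ∈ σᶜ, ∑ i ∈ σ, sgn σ j * sgn (insert j σ) i *
        (X j * pderiv i (ω (insert j (σ.erase i)))) = 0 := by
    rw [sum_comm (s := σᶜ), ← sum_add_distrib]
    refine sum_eq_zero fun i hi => ?_
    rw [← sum_add_distrib]
    refine sum_eq_zero fun j hj => ?_
    rw [sgn_mul_sgn_erase hi (mem_compl.mp hj)]
    ring
  rw [extD_koszul_apply, koszul_extD_apply, ← sum_add_sum_compl σ (fun i => X i * pderiv i (ω σ))]
  linear_combination cancel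

end KoszulComplex

section Homogeneous

variable {n : ℕ}

lemma formMonomial_eq_single (α : Fin n →₀ ℕ) (σ : Finset (Fin n)) :
    formMonomial α σ = Pi.single σ (monomial α 1) := by
  funext τ
  simp [formMonomial, Pi.single_apply]

lemma single_mem_Hspace {r k : ℕ} {σ : Finset (Fin n)} (hσ : σ.card = k)
    {p : MvPolynomial (Fin n) ℝ} (hp : p.IsHomogeneous r) : Pi.single σ p ∈ Hspace n r k := by
  rw [← mem_homogeneousSubmodule, homogeneousSubmodule_eq_finsupp_supported,
    AddMonoidAlgebra.supported_eq_span_single] at hp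
  refine (span_le.mpr ?_ : _ ≤ (Hspace n r k).comap (LinearMap.single ℝ _ σ)) hp
  rintro _ ⟨α, hα, rfl⟩
  exact subset_span ⟨α, σ, hσ, hα, (formMonomial_eq_single α σ).symm⟩

lemma Hspace_eq (n r k : ℕ) :
    Hspace n r k = Lambda n k ⊓ pi Set.univ fun _ => homogeneousSubmodule (Fin n) ℝ r := by
  refine le_antisymm (span_le.mpr ?_) fun ω ⟨hω, hhom⟩ => ?_
  · rintro _ ⟨α, σ, hσ, hα, rfl⟩
    rw [formMonomial_eq_single]
    refine ⟨fun τ hτ => Pi.single_eq_of_ne (by rintro rfl; exact hτ hσ) _, fun τ _ => ?_⟩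
    rw [SetLike.mem_coe, mem_homogeneousSubmodule, Pi.single_apply]
    split_ifs
    · exact isHomogeneous_monomial _ hα
    · exact isHomogeneous_zero _ _ _
  · rw [← univ_sum_single ω]
    refine sum_mem fun σ _ => ?_
    by_cases hσ : σ.card = k
    · exact single_mem_Hspace hσ (hhom σ (Set.mem_univ σ))
    · rw [hω σ hσ, Pi.single_zero]
      exact zero_mem _

lemma mem_Hspace_iff {r k : ℕ} {ω : PolyForm n} :
    ω ∈ Hspace n r k ↔ ω ∈ Lambda n k ∧ ∀ σ, (ω σ).IsHomogeneous r := by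
  simp [Hspace_eq, Submodule.mem_pi, mem_homogeneousSubmodule]

lemma isHomogeneous_sgn (σ : Finset (Fin n)) (i : Fin n) : (sgn σ i).IsHomogeneous 0 :=
  sgn_eq_C σ i ▸ isHomogeneous_C _ _

lemma koszul_mem_Hspace {r k : ℕ} {ω : PolyForm n} (h : ω ∈ Hspace n r (k + 1)) :
    koszul n ω ∈ Hspace n (r + 1) k := by
  obtain ⟨hΛ, hhom⟩ := mem_Hspace_iff.mp h
  refine mem_Hspace_iff.mpr ⟨fun σ hσ => sum_eq_zero fun i hi => ?_, fun σ => ?_⟩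
  · rw [hΛ _ (by rw [card_insert_of_notMem (mem_compl.mp hi)]; omega), mul_zero]
  · refine IsHomogeneous.sum _ _ _ fun i _ => ?_
    convert ((isHomogeneous_sgn σ i).mul (isHomogeneous_X ℝ i)).mul (hhom (insert i σ)) using 1
    omega

lemma extD_mem_Hspace {r k : ℕ} {ω : PolyForm n} (h : ω ∈ Hspace n (r + 1) k) :
    extD n ω ∈ Hspace n r (k + 1) := by
  obtain ⟨hΛ, hhom⟩ := mem_Hspace_iff.mp h
  refine mem_Hspace_iff.mpr ⟨fun σ hσ => sum_eq_zero fun i hi => ?_, fun σ => ?_⟩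
  · have := card_pos.mpr ⟨i, hi⟩
    rw [hΛ _ (by rw [card_erase_of_mem hi]; omega), map_zero, mul_zero]
  · refine IsHomogeneous.sum _ _ _ fun i _ => ?_
    convert (isHomogeneous_sgn σ i).mul (hhom (σ.erase i)).pderiv using 1
    omega

lemma koszul_eq_zero_of_mem_Lambda_zero {ω : PolyForm n} (h : ω ∈ Lambda n 0) :
    koszul n ω = 0 := by
  funext σ
  refine sum_eq_zero fun i _ => ?_
  rw [h _ (card_ne_zero_of_mem (mem_insert_self i σ)), mul_zero]

lemma extD_koszul_add_koszul_extD {r k : ℕ} {ω : PolyForm n} (h : ω ∈ Hspace n r k) :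
    extD n (koszul n ω) + koszul n (extD n ω) = (r + k) • ω := by
  obtain ⟨hΛ, hhom⟩ := mem_Hspace_iff.mp h
  funext σ
  rw [Pi.add_apply, Pi.smul_apply, extD_koszul_add_koszul_extD_apply]
  by_cases hσ : σ.card = k
  · rw [(hhom σ).sum_X_mul_pderiv, hσ, add_comm r, add_smul]
  · simp [hΛ σ hσ]

end Homogeneous

section Dimension

instance (n r k : ℕ) : FiniteDimensional ℝ (Hspace n r k) := by
  have : Finite {α : Fin n →₀ ℕ | mdeg α = r} := inferInstanceAs (Finite {α // mdeg α = r})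
  rw [Hspace, setOf_formMonomial_eq_image]
  exact FiniteDimensional.span_of_finite ℝ ((Set.toFinite _).image _)

instance (n r k : ℕ) : FiniteDimensional ℝ (Pspace n r k) := by
  have : Finite {α : Fin n →₀ ℕ | mdeg α ≤ r} := inferInstanceAs (Finite {α // mdeg α ≤ r})
  rw [Pspace, setOf_formMonomial_eq_image]
  exact FiniteDimensional.span_of_finite ℝ ((Set.toFinite _).image _)

lemma disjoint_Pspace_Hspace {n s r : ℕ} (h : s < r) (k j : ℕ) :
    Disjoint (Pspace n s k) (Hspace n r j) := by
  rw [Pspace, Hspace, setOf_formMonomial_eq_image, setOf_formMonomial_eq_image]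
  refine (formBasis n).linearIndependent.disjoint_span_image ?_
  exact Set.disjoint_left.mpr fun p hs hr => by
    have : mdeg p.2 ≤ s := hs.2
    have : mdeg p.2 = r := hr.2
    omega

lemma ker_koszul_inf_Hspace (n r k : ℕ) :
    LinearMap.ker (koszul n) ⊓ Hspace n (r + 1) k = (Hspace n r (k + 1)).map (koszul n) := by
  apply le_antisymm
  · rintro ω ⟨hker, hω⟩
    have hc : ((r + 1 + k : ℕ) : ℝ) ≠ 0 := by positivity
    have hcartan := extD_koszul_add_koszul_extD hω
    rw [LinearMap.mem_ker.mp hker, map_zero, zero_add] at hcartan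
    refine ⟨((r + 1 + k : ℕ) : ℝ)⁻¹ • extD n ω, smul_mem _ _ (extD_mem_Hspace hω), ?_⟩
    rw [map_smul, hcartan, ← Nat.cast_smul_eq_nsmul ℝ, smul_smul, inv_mul_cancel₀ hc, one_smul]
  · rintro _ ⟨η, hη, rfl⟩
    exact ⟨koszul_koszul η, koszul_mem_Hspace hη⟩

lemma Submodule.finrank_map_add_finrank_ker_inf {K V W : Type*} [DivisionRing K]
    [AddCommGroup V] [Module K V] [AddCommGroup W] [Module K W] (f : V →ₗ[K] W)
    (p : Submodule K V) [FiniteDimensional K p] :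
    finrank K (p.map f) + finrank K (LinearMap.ker f ⊓ p : Submodule K V) = finrank K p := by
  rw [← (comapSubtypeEquivOfLe (inf_le_right : LinearMap.ker f ⊓ p ≤ p)).finrank_eq, comap_inf,
    comap_subtype_self, inf_top_eq]
  have h := LinearMap.finrank_range_add_finrank_ker (f.domRestrict p)
  rwa [LinearMap.range_domRestrict, LinearMap.ker_domRestrict] at h

lemma finrank_map_koszul_Hspace_add (n r k : ℕ) :
    finrank ℝ ((Hspace n (r + 1) k).map (koszul n)) +
      finrank ℝ ((Hspace n r (k + 1)).map (koszul n)) = finrank ℝ (Hspace n (r + 1) k) := by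
  rw [← ker_koszul_inf_Hspace]
  exact finrank_map_add_finrank_ker_inf _ _

lemma map_koszul_Hspace_zero (n r : ℕ) : (Hspace n r 0).map (koszul n) = ⊥ := by
  rw [eq_bot_iff]
  rintro _ ⟨ω, hω, rfl⟩
  exact (mem_bot ℝ).mpr (koszul_eq_zero_of_mem_Lambda_zero (mem_Hspace_iff.mp hω).1)

lemma koszul_choose_recurrence (n r j : ℕ) :
    (n + r + 1).choose (r + j + 2) * (r + j + 1).choose j +
        (n + r).choose (r + j + 2) * (r + j + 1).choose (j + 1) =
      (n + r).choose (r + 1) * n.choose (j + 1) := by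
  cases n with
  | zero =>
    rw [Nat.choose_eq_zero_of_lt (by omega : 0 + r + 1 < r + j + 2),
      Nat.choose_eq_zero_of_lt (by omega : 0 + r < r + j + 2),
      Nat.choose_eq_zero_of_lt (by omega : 0 < j + 1)]
    simp
  | succ m =>
    have h₁ : (m + 1 + r).choose (r + j + 1) * (r + j + 1).choose (r + 1) =
        (m + 1 + r).choose (r + 1) * m.choose j := by
      rw [Nat.choose_mul (by omega), show m + 1 + r - (r + 1) = m by omega,
        show r + j + 1 - (r + 1) = j by omega]
    have h₂ : (m + 1 + r).choose (r + j + 2) * (r + j + 2).choose (r + 1) =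
        (m + 1 + r).choose (r + 1) * m.choose (j + 1) := by
      rw [Nat.choose_mul (by omega), show m + 1 + r - (r + 1) = m by omega,
        show r + j + 2 - (r + 1) = j + 1 by omega]
    calc (m + 1 + r + 1).choose (r + j + 2) * (r + j + 1).choose j +
          (m + 1 + r).choose (r + j + 2) * (r + j + 1).choose (j + 1)
        = (m + 1 + r).choose (r + j + 1) * (r + j + 1).choose (r + 1) +
          (m + 1 + r).choose (r + j + 2) * (r + j + 2).choose (r + 1) := by
          rw [Nat.choose_succ_succ' (m + 1 + r) (r + j + 1),
            Nat.choose_symm_of_eq_add (show r + j + 2 = (r + 1) + (j + 1) by omega),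
            Nat.choose_succ_succ' (r + j + 1) j,
            Nat.choose_symm_of_eq_add (show r + j + 1 = j + (r + 1) by omega)]
          ring
      _ = (m + 1 + r).choose (r + 1) * (m + 1).choose (j + 1) := by
          rw [h₁, h₂, Nat.choose_succ_succ' m j]
          ring

/-- This is `binomial(n+r, n-k-1) · binomial(r+k, k)`, rewritten to avoid truncated subtraction,
which would give a nonzero value for `k ≥ n`. -/
lemma finrank_map_koszul_Hspace (n r k : ℕ) :
    finrank ℝ ((Hspace n r (k + 1)).map (koszul n)) =
      (n + r).choose (r + k + 1) * (r + k).choose k := by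
  induction k generalizing r with
  | zero =>
    have h := finrank_map_koszul_Hspace_add n r 0
    rw [map_koszul_Hspace_zero, finrank_bot, zero_add, finrank_Hspace] at h
    simpa [← add_assoc] using h
  | succ j ih =>
    have h := finrank_map_koszul_Hspace_add n r (j + 1)
    have key := koszul_choose_recurrence n r j
    rw [ih, finrank_Hspace, ← add_assoc, Nat.add_sub_cancel] at h
    ring_nf at h key ⊢
    omega

end Dimension

lemma trimmed_choose_identity (n s k : ℕ) :
    (n + s).choose s * n.choose k + (n + s).choose (s + k + 1) * (s + k).choose k =
      (s + 1 + n).choose (s + 1 + k) * (s + 1 + k - 1).choose k := by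
  have h : (n + s).choose (s + k) * (s + k).choose s = (n + s).choose s * n.choose k := by
    rw [Nat.choose_mul (by omega), Nat.add_sub_cancel, Nat.add_sub_cancel_left]
  calc (n + s).choose s * n.choose k + (n + s).choose (s + k + 1) * (s + k).choose k
      = ((n + s).choose (s + k) + (n + s).choose (s + k + 1)) * (s + k).choose k := by
        rw [← h, Nat.choose_symm_add]
        ring
    _ = (s + 1 + n).choose (s + 1 + k) * (s + 1 + k - 1).choose k := by
        rw [← Nat.choose_succ_succ', show s + 1 + n = n + s + 1 by omega,
          show s + 1 + k = s + k + 1 by omega, Nat.add_sub_cancel]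

/-- `dim P_r^-Λ^k(ℝ^n) = C(r+n, r+k) · C(r+k-1, k)`. -/
theorem dim_PminusSpace (n r k : ℕ) (hr : 1 ≤ r) :
    Module.finrank ℝ (PminusSpace n r k) =
      (r + n).choose (r + k) * (r + k - 1).choose k := by
  obtain ⟨s, rfl⟩ := Nat.exists_eq_add_of_le' hr
  have hdisj : Disjoint (Pspace n s k) ((Hspace n s (k + 1)).map (koszul n)) :=
    (disjoint_Pspace_Hspace (Nat.lt_succ_self s) k k).mono_right
      (map_le_iff_le_comap.mpr fun _ => koszul_mem_Hspace)
  have hsum := finrank_sup_add_finrank_inf_eq (Pspace n s k) ((Hspace n s (k + 1)).map (koszul n))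
  rw [hdisj.eq_bot, finrank_bot, add_zero] at hsum
  rw [PminusSpace, Nat.add_sub_cancel, hsum, finrank_Pspace, finrank_map_koszul_Hspace,
    trimmed_choose_identity]
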